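/- arXiv:1708.02491 — 4 statements merged into one kernel-verified Lean document; each statement's English description precedes it below -/
import Mathlib

section
/- Let δ ∈ (0,1), let q ≥ 1 be an integer, and let K be an integer with K > (2q+1)/δ. Let R be a real K×K matrix of rank exactly q such that every q×q minor of R is nonzero. Then R is the unique rank-q completion of its banded part: if θ is any real K×K matrix with rank(θ) ≤ q and θ(j,l) = R(j,l) for all pairs (j,l) with |j−l| < ⌊Kδ⌋ − 1, then θ = R. -/
open Matrix

/-- Any `(r+1) × (r+1)` submatrix of a matrix of rank `≤ r` has zero determinant. -/
lemma det_submatrix_eq_zero_of_rank_le {K r : ℕ} (M : Matrix (Fin K) (Fin K) ℝ)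
    (h : M.rank ≤ r) (f g : Fin (r + 1) → Fin K) : (M.submatrix f g).det = 0 := by
  by_contra hdet
  have hu : IsUnit (M.submatrix f g) :=
    (Matrix.isUnit_iff_isUnit_det _).mpr (isUnit_iff_ne_zero.mpr hdet)
  have hr1 : (M.submatrix f g).rank = r + 1 := by
    simpa using Matrix.rank_of_isUnit _ hu
  have hle : (M.submatrix f g).rank ≤ M.rank := by
    have e : M.submatrix f g =
        ((1 : Matrix (Fin K) (Fin K) ℝ).submatrix f _root_.id) * M *
          ((1 : Matrix (Fin K) (Fin K) ℝ).submatrix _root_.id g) := by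
      ext i k
      simp [Matrix.mul_apply, Matrix.one_apply, Finset.sum_ite_eq, Finset.sum_ite_eq',
        ite_mul, mul_ite]
    calc (M.submatrix f g).rank
        ≤ (((1 : Matrix (Fin K) (Fin K) ℝ).submatrix f _root_.id) * M).rank := by
          rw [e]; exact Matrix.rank_mul_le_left _ _
      _ ≤ M.rank := Matrix.rank_mul_le_right _ _
  omega

/-- Key inductive step: if `θ` agrees with `R` at all pairs of index distance `< n`,
`2q ≤ n`, and `l = j + n`, then `θ j l = R j l`. -/
lemma band_step {q K : ℕ} (hq : 1 ≤ q) (R θ : Matrix (Fin K) (Fin K) ℝ)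
    (hrank : R.rank = q)
    (hminor : ∀ f g : Fin q → Fin K, Function.Injective f → Function.Injective g →
      (R.submatrix f g).det ≠ 0)
    (hθrank : θ.rank ≤ q)
    (n : ℕ) (h2q : 2 * q ≤ n) (j l : Fin K) (hjl : (j : ℕ) + n = (l : ℕ))
    (ih : ∀ a b : Fin K, ((a : ℤ) - (b : ℤ)).natAbs < n → θ a b = R a b) :
    θ j l = R j l := by
  have hlK := l.isLt
  -- rows j, j+1, ..., j+q
  set f : Fin (q + 1) → Fin K := fun a => ⟨(j : ℕ) + a, by have := a.isLt; omega⟩ with hf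
  -- columns l-q, ..., l
  set g : Fin (q + 1) → Fin K := fun b => ⟨(l : ℕ) - q + b, by have := b.isLt; omega⟩ with hg
  have hfinj : Function.Injective f := by
    intro a b hab
    have := congrArg Fin.val hab
    simp only [hf] at this
    exact Fin.ext (by omega)
  have hginj : Function.Injective g := by
    intro a b hab
    have := congrArg Fin.val hab
    have ha := a.isLt; have hb := b.isLt
    simp only [hg] at this
    exact Fin.ext (by omega)
  -- agreement on all entries except (0, last)
  have hagree : ∀ a b : Fin (q + 1), ((a : ℕ) ≠ 0 ∨ (b : ℕ) ≠ q) →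
      θ (f a) (g b) = R (f a) (g b) := by
    intro a b hab
    apply ih
    have ha := a.isLt; have hb := b.isLt
    simp only [hf, hg]
    omega
  set A := θ.submatrix f g with hA
  set B := R.submatrix f g with hB
  have hrowsub : ∀ b : Fin (q + 1),
      A.submatrix Fin.succ b.succAbove = B.submatrix Fin.succ b.succAbove := by
    intro b
    ext i k
    simp only [hA, hB, Matrix.submatrix_apply]
    exact hagree _ _ (Or.inl (by simp [Fin.val_succ]))
  have hdetA : A.det = 0 := det_submatrix_eq_zero_of_rank_le θ hθrank f g
  have hdetB : B.det = 0 := det_submatrix_eq_zero_of_rank_le R (le_of_eq hrank) f g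
  have h1 : A.det = ∑ b : Fin (q + 1),
      (-1 : ℝ) ^ (b : ℕ) * A 0 b * (B.submatrix Fin.succ b.succAbove).det := by
    rw [Matrix.det_succ_row_zero]
    exact Finset.sum_congr rfl fun b _ => by rw [hrowsub b]
  have h2 : B.det = ∑ b : Fin (q + 1),
      (-1 : ℝ) ^ (b : ℕ) * B 0 b * (B.submatrix Fin.succ b.succAbove).det :=
    Matrix.det_succ_row_zero B
  have h3 : (0 : ℝ) = ∑ b : Fin (q + 1),
      (-1 : ℝ) ^ (b : ℕ) * (A 0 b - B 0 b) * (B.submatrix Fin.succ b.succAbove).det := by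
    have : A.det - B.det = ∑ b : Fin (q + 1),
        (-1 : ℝ) ^ (b : ℕ) * (A 0 b - B 0 b) * (B.submatrix Fin.succ b.succAbove).det := by
      rw [h1, h2, ← Finset.sum_sub_distrib]
      exact Finset.sum_congr rfl fun b _ => by ring
    rw [hdetA, hdetB] at this
    simpa using this
  have h4 : ∑ b : Fin (q + 1),
      (-1 : ℝ) ^ (b : ℕ) * (A 0 b - B 0 b) * (B.submatrix Fin.succ b.succAbove).det
      = (-1 : ℝ) ^ q * (A 0 (Fin.last q) - B 0 (Fin.last q)) *
          (B.submatrix Fin.succ (Fin.last q).succAbove).det := by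
    rw [Finset.sum_eq_single (Fin.last q)]
    · simp [Fin.val_last]
    · intro b _ hb
      have : A 0 b - B 0 b = 0 := by
        have := hagree 0 b (Or.inr (fun h => hb (Fin.ext (by simp [h, Fin.val_last]))))
        simp only [hA, hB, Matrix.submatrix_apply]
        rw [this]; ring
      rw [this]; ring
    · intro h; exact absurd (Finset.mem_univ _) h
  have hminor' : (B.submatrix Fin.succ (Fin.last q).succAbove).det ≠ 0 := by
    have : B.submatrix Fin.succ (Fin.last q).succAbove
        = R.submatrix (f ∘ Fin.succ) (g ∘ (Fin.last q).succAbove) := rfl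
    rw [this]
    exact hminor _ _ (hfinj.comp (Fin.succ_injective q))
      (hginj.comp (Fin.succAbove_right_injective))
  have hsign : ((-1 : ℝ) ^ q) ≠ 0 := by
    simp
  have key : A 0 (Fin.last q) - B 0 (Fin.last q) = 0 := by
    rw [h4] at h3
    rcases mul_eq_zero.mp h3.symm with h | h
    · rcases mul_eq_zero.mp h with h' | h'
      · exact absurd h' hsign
      · exact h'
    · exact absurd h hminor'
  have hf0 : f 0 = j := Fin.ext (by simp [hf])
  have hgl : g (Fin.last q) = l := Fin.ext (by simp [hg, Fin.val_last]; omega)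
  have := sub_eq_zero.mp key
  simp only [hA, hB, Matrix.submatrix_apply, hf0, hgl] at this
  exact this

/-- deterministic core of Proposition 2.
If `K > (2q+1)/δ` and `R` is a real `K × K` matrix of rank exactly `q` all of whose
`q × q` minors are nonzero, then `R` is the unique completion of its banded part among
matrices of rank at most `q`. -/
theorem unique_rank_q_band_completion
    (δ : ℝ) (hδ : δ ∈ Set.Ioo (0 : ℝ) 1) (q K : ℕ) (hq : 1 ≤ q)
    (hK : (2 * (q : ℝ) + 1) / δ < (K : ℝ))
    (R : Matrix (Fin K) (Fin K) ℝ)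
    (hrank : R.rank = q)
    (hminor : ∀ f g : Fin q → Fin K, Function.Injective f → Function.Injective g →
      (R.submatrix f g).det ≠ 0)
    (θ : Matrix (Fin K) (Fin K) ℝ)
    (hθrank : θ.rank ≤ q)
    (hband : ∀ j l : Fin K, |(j : ℤ) - (l : ℤ)| < ⌊(K : ℝ) * δ⌋ - 1 → θ j l = R j l) :
    θ = R := by
  have hfloor : 2 * (q : ℤ) + 1 ≤ ⌊(K : ℝ) * δ⌋ := by
    apply Int.le_floor.mpr
    have h1 : (2 * (q : ℝ) + 1) < (K : ℝ) * δ := by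
      have := (div_lt_iff₀ hδ.1).mp hK
      linarith
    push_cast
    linarith
  suffices H : ∀ n : ℕ, ∀ j l : Fin K, ((j : ℤ) - (l : ℤ)).natAbs = n → θ j l = R j l by
    ext j l
    exact H _ j l rfl
  intro n
  induction n using Nat.strong_induction_on with
  | _ n ihn =>
    intro j l hn
    by_cases hcase : (n : ℤ) < ⌊(K : ℝ) * δ⌋ - 1
    · apply hband
      rw [Int.abs_eq_natAbs, hn]
      exact_mod_cast hcase
    · push_neg at hcase
      have h2q : 2 * q ≤ n := by omega
      have ih : ∀ a b : Fin K, ((a : ℤ) - (b : ℤ)).natAbs < n → θ a b = R a b :=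
        fun a b hab => ihn _ hab a b rfl
      rcases le_or_gt (j : ℕ) (l : ℕ) with hle | hlt
      · have hjl : (j : ℕ) + n = (l : ℕ) := by omega
        exact band_step hq R θ hrank hminor hθrank n h2q j l hjl ih
      · have hjl : (l : ℕ) + n = (j : ℕ) := by omega
        have hRT : Rᵀ.rank = q := by rw [Matrix.rank_transpose]; exact hrank
        have hθT : θᵀ.rank ≤ q := by rw [Matrix.rank_transpose]; exact hθrank
        have hminorT : ∀ f g : Fin q → Fin K, Function.Injective f → Function.Injective g →
            (Rᵀ.submatrix f g).det ≠ 0 := by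
          intro f g hfi hgi
          have : Rᵀ.submatrix f g = (R.submatrix g f)ᵀ := rfl
          rw [this, Matrix.det_transpose]
          exact hminor g f hgi hfi
        have ihT : ∀ a b : Fin K, ((a : ℤ) - (b : ℤ)).natAbs < n → θᵀ a b = Rᵀ a b := by
          intro a b hab
          simp only [Matrix.transpose_apply]
          exact ih b a (by omega)
        have := band_step hq Rᵀ θᵀ hRT hminorT hθT n h2q l j hjl ihT
        simpa using this
end

section
/- Let δ ∈ (0,1), let q ≥ 1 be an integer, and let K be an integer with K > (2q+1)/δ. Let R be a real symmetric positive semidefinite K×K matrix of rank exactly q such that every q×q minor of R is nonzero. Then there exists τ₀ > 0 such that for every τ ∈ (0, τ₀), R is the unique minimizer of the function θ ↦ K^{−2} ‖P^K_δ ∘ (R − θ)‖²_F + τ · rank(θ) over the set of positive semidefinite K×K matrices θ with trace(θ) ≤ trace(R). -/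
open Matrix

/-- The `K × K` band pattern matrix `P^K_δ`, with `(j,l)` entry `1` if
`|j - l| < ⌊Kδ⌋ - 1` and `0` otherwise. -/
noncomputable def bandMatrix (K : ℕ) (δ : ℝ) : Matrix (Fin K) (Fin K) ℝ :=
  Matrix.of fun j l => if |(j : ℤ) - (l : ℤ)| < ⌊(K : ℝ) * δ⌋ - 1 then 1 else 0

/-- The squared Frobenius norm of a matrix. -/
def frobSq {K : ℕ} (M : Matrix (Fin K) (Fin K) ℝ) : ℝ :=
  ∑ j, ∑ l, (M j l) ^ 2

/-!
A feasible `θ` of rank `< q` has a vanishing leading `q × q` minor while `R` does not. Feasible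
matrices form a compact set, so on those `θ` the band loss is bounded below by some `c > 0`, and
for `τ` small against `c` they lose to `R`. A `θ` of rank `≥ q` ties with `R` only if its band loss
vanishes and its rank is `q`. Then `θ` agrees with `R` on the band `|j - l| < 2q`, and this
determines it: border a `q × q` window just left of `l` by row `j` and column `l`; both
`(q + 1) × (q + 1)` minors vanish, they differ only in the corner, and the complementary minor of
`R` is nonzero, so `θ j l = R j l`. Induction on `l - j` extends the agreement off the band.
-/

namespace Matrix

variable {m n ι F : Type*} [Field F]

theorem det_submatrix_eq_zero_of_rank_lt [Fintype n] [Fintype ι] [DecidableEq ι]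
    {A : Matrix m n F} (f : ι → m) (g : ι → n) (h : A.rank < Fintype.card ι) :
    (A.submatrix f g).det = 0 := by
  by_contra hdet
  have hunit : IsUnit (A.submatrix f g) := (isUnit_iff_isUnit_det _).2 (isUnit_iff_ne_zero.2 hdet)
  have := rank_submatrix_le A f g
  rw [rank_of_isUnit _ hunit] at this
  omega

theorem det_sub_det_of_eq_off_corner {R : Type*} [CommRing R] {q : ℕ}
    (M N : Matrix (Fin (q + 1)) (Fin (q + 1)) R)
    (h : ∀ i j, (i ≠ Fin.last q ∨ j ≠ Fin.last q) → M i j = N i j) :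
    M.det - N.det =
      (M (Fin.last q) (Fin.last q) - N (Fin.last q) (Fin.last q)) *
        (N.submatrix Fin.castSucc Fin.castSucc).det := by
  have hminor : ∀ i : Fin (q + 1), M.submatrix i.succAbove (Fin.last q).succAbove =
      N.submatrix i.succAbove (Fin.last q).succAbove := fun i => by
    ext k k'
    exact h _ _ (.inr (by simp [Fin.succAbove_last, (Fin.castSucc_lt_last k').ne]))
  rw [det_succ_column M (Fin.last q), det_succ_column N (Fin.last q), ← Finset.sum_sub_distrib,
    Finset.sum_eq_single (Fin.last q)]
  · rw [hminor, Fin.succAbove_last, Fin.val_last, ← two_mul, pow_mul]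
    ring
  · intro i _ hi
    rw [hminor, h i _ (.inl hi), sub_self]
  · simp

theorem apply_eq_of_submatrix_snoc {K q : ℕ} {θ R : Matrix (Fin K) (Fin K) F}
    (hθ : θ.rank ≤ q) (hR : R.rank ≤ q) (a : Fin q → Fin K) (j l : Fin K)
    (hminor : (R.submatrix a a).det ≠ 0)
    (hwin : ∀ i i', θ (a i) (a i') = R (a i) (a i'))
    (hrow : ∀ i, θ j (a i) = R j (a i)) (hcol : ∀ i, θ (a i) l = R (a i) l) :
    θ j l = R j l := by
  have hsing : ∀ A : Matrix (Fin K) (Fin K) F, A.rank ≤ q →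
      (A.submatrix (Fin.snoc a j) (Fin.snoc a l)).det = 0 := fun A hA =>
    det_submatrix_eq_zero_of_rank_lt _ _ (by simpa using Nat.lt_succ_of_le hA)
  have hoff : ∀ i i', (i ≠ Fin.last q ∨ i' ≠ Fin.last q) →
      θ.submatrix (Fin.snoc a j) (Fin.snoc a l) i i' =
        R.submatrix (Fin.snoc a j) (Fin.snoc a l) i i' := by
    intro i i' hii'
    induction i using Fin.lastCases <;> induction i' using Fin.lastCases <;>
      simp_all [Fin.snoc_castSucc]
  have hdiff := det_sub_det_of_eq_off_corner _ _ hoff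
  simp only [hsing θ hθ, hsing R hR, sub_self, submatrix_apply, Fin.snoc_last,
    submatrix_submatrix, Function.comp_def, Fin.snoc_castSucc] at hdiff
  exact sub_eq_zero.1 ((mul_eq_zero.1 hdiff.symm).resolve_right hminor)

theorem apply_eq_of_eqOn_band_of_le {K q : ℕ} {θ R : Matrix (Fin K) (Fin K) F}
    (hθ : θ.rank ≤ q) (hR : R.rank ≤ q)
    (hminor : ∀ f : Fin q → Fin K, Function.Injective f → (R.submatrix f f).det ≠ 0)
    (hband : ∀ j l : Fin K, |(j : ℤ) - l| < 2 * q → θ j l = R j l)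
    (j l : Fin K) (hjl : j ≤ l) : θ j l = R j l := by
  obtain ⟨d, hd⟩ : ∃ d, (l : ℕ) = j + d := ⟨l - j, by omega⟩
  induction d using Nat.strong_induction_on generalizing j l with
  | _ d ih =>
  by_cases hnear : d < 2 * q
  · exact hband j l (abs_sub_lt_iff.2 ⟨by omega, by omega⟩)
  -- entries between the window and `l` lie in the band, those between `j` and it are nearer the
  -- diagonal than `(j, l)`
  let a : Fin q → Fin K := fun i => ⟨l - q + i, by omega⟩
  have ha : ∀ i, (a i : ℕ) + q = l + i := fun i => by simp only [a]; omega
  have ha_inj : Function.Injective a := fun i i' h => by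
    have := ha i; have := ha i'; have := congrArg Fin.val h; exact Fin.ext (by omega)
  have hwin : ∀ i i', θ (a i) (a i') = R (a i) (a i') := fun i i' =>
    hband _ _ (abs_sub_lt_iff.2 (by have := ha i; have := ha i'; omega))
  have hcol : ∀ i, θ (a i) l = R (a i) l := fun i =>
    hband _ _ (abs_sub_lt_iff.2 (by have := ha i; omega))
  have hrow : ∀ i, θ j (a i) = R j (a i) := fun i => by
    have := ha i
    exact ih (d - q + i) (by omega) j (a i) (Fin.le_iff_val_le_val.2 (by omega)) (by omega)
  exact apply_eq_of_submatrix_snoc hθ hR a j l (hminor a ha_inj) hwin hrow hcol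

theorem eq_of_eqOn_band_of_rank_le {K q : ℕ} {θ R : Matrix (Fin K) (Fin K) F}
    (hθs : θ.IsSymm) (hRs : R.IsSymm) (hθ : θ.rank ≤ q) (hR : R.rank ≤ q)
    (hminor : ∀ f : Fin q → Fin K, Function.Injective f → (R.submatrix f f).det ≠ 0)
    (hband : ∀ j l : Fin K, |(j : ℤ) - l| < 2 * q → θ j l = R j l) : θ = R := by
  ext j l
  rcases le_total j l with hjl | hlj
  · exact apply_eq_of_eqOn_band_of_le hθ hR hminor hband j l hjl
  · rw [← hθs.apply, ← hRs.apply]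
    exact apply_eq_of_eqOn_band_of_le hθ hR hminor hband l j hlj

end Matrix

section FrobSq

variable {K : ℕ}

theorem frobSq_nonneg (M : Matrix (Fin K) (Fin K) ℝ) : 0 ≤ frobSq M := by
  unfold frobSq; positivity

@[simp]
theorem frobSq_zero : frobSq (0 : Matrix (Fin K) (Fin K) ℝ) = 0 := by
  simp [frobSq]

theorem frobSq_eq_zero_iff {M : Matrix (Fin K) (Fin K) ℝ} : frobSq M = 0 ↔ M = 0 := by
  simp [frobSq, Finset.sum_eq_zero_iff_of_nonneg, Finset.sum_nonneg, sq_nonneg, ← Matrix.ext_iff]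

end FrobSq

namespace Matrix.PosSemidef

variable {n : Type*} [Fintype n] [DecidableEq n] {A : Matrix n n ℝ}

theorem abs_apply_le_trace (hA : A.PosSemidef) (i j : n) : |A i j| ≤ A.trace := by
  have hquad : ∀ x : n → ℝ, 0 ≤ x ⬝ᵥ A *ᵥ x := by simpa using hA.dotProduct_mulVec_nonneg
  have hdiag : ∀ k, A k k ≤ A.trace := fun k =>
    Finset.single_le_sum (f := fun k => A k k) (fun k _ => hA.diag_nonneg) (Finset.mem_univ k)
  have hsymm : A j i = A i j := by simpa using hA.isHermitian.apply i j
  have hplus := hquad (Pi.single i 1 + Pi.single j 1)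
  have hminus := hquad (Pi.single i 1 - Pi.single j 1)
  simp only [mulVec_add, mulVec_sub, add_dotProduct, sub_dotProduct, dotProduct_add,
    dotProduct_sub, mulVec_single_one, single_one_dotProduct, col_apply] at hplus hminus
  rw [abs_le]
  constructor <;> linarith [hdiag i, hdiag j]

end Matrix.PosSemidef

theorem Matrix.isClosed_setOf_posSemidef {n : Type*} [Fintype n] :
    IsClosed {A : Matrix n n ℝ | A.PosSemidef} := by
  simp only [posSemidef_iff_dotProduct_mulVec, Set.ofPred_and, Set.ofPred_forall]
  refine .inter (isClosed_eq (continuous_id.matrix_conjTranspose) continuous_id)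
    (isClosed_iInter fun x => isClosed_le continuous_const (by fun_prop))

theorem Matrix.isCompact_setOf_posSemidef_trace_le {n : Type*} [Fintype n] [DecidableEq n]
    (t : ℝ) : IsCompact {A : Matrix n n ℝ | A.PosSemidef ∧ A.trace ≤ t} := by
  have hbox : IsCompact (Set.univ.pi fun _ : n => Set.univ.pi fun _ : n => Set.Icc (-t) t) :=
    isCompact_univ_pi fun _ => isCompact_univ_pi fun _ => isCompact_Icc
  refine hbox.of_isClosed_subset (isClosed_setOf_posSemidef.inter
    (isClosed_le continuous_id.matrix_trace continuous_const)) ?_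
  rintro A ⟨hA, htr⟩ i - j -
  exact abs_le.1 ((hA.abs_apply_le_trace i j).trans htr)

theorem bandMatrix_eq_one {K q : ℕ} {δ : ℝ} (hδ : 0 < δ) (hK : (2 * (q : ℝ) + 1) / δ < K)
    {j l : Fin K} (hjl : |(j : ℤ) - l| < 2 * q) : bandMatrix K δ j l = 1 := by
  have hKδ : 2 * (q : ℝ) + 1 < K * δ := (div_lt_iff₀ hδ).1 hK
  have : 2 * (q : ℤ) + 1 ≤ ⌊(K : ℝ) * δ⌋ := Int.le_floor.2 (by push_cast; linarith)
  exact if_pos (by omega)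

section BandLoss

variable {K : ℕ}

theorem apply_eq_of_frobSq_hadamard_eq_zero {P R θ : Matrix (Fin K) (Fin K) ℝ}
    (h : frobSq (P.hadamard (R - θ)) = 0) {j l : Fin K} (hP : P j l ≠ 0) : θ j l = R j l := by
  have := congr_fun₂ (frobSq_eq_zero_iff.1 h) j l
  simp only [hadamard_apply, Matrix.sub_apply, Matrix.zero_apply, mul_eq_zero, hP, false_or,
    sub_eq_zero] at this
  exact this.symm

theorem continuous_frobSq_hadamard_sub (P R : Matrix (Fin K) (Fin K) ℝ) :
    Continuous fun θ => frobSq (P.hadamard (R - θ)) := by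
  simp only [frobSq, hadamard_apply, Matrix.sub_apply]
  fun_prop

theorem exists_pos_le_frobSq_hadamard_of_rank_lt {ι : Type*} [Fintype ι] [DecidableEq ι]
    (P R : Matrix (Fin K) (Fin K) ℝ) (f : ι → Fin K) (hP : ∀ i i', P (f i) (f i') ≠ 0)
    (hR : (R.submatrix f f).det ≠ 0) (t : ℝ) :
    ∃ c > 0, ∀ θ : Matrix (Fin K) (Fin K) ℝ, θ.PosSemidef → θ.trace ≤ t →
      θ.rank < Fintype.card ι → c ≤ frobSq (P.hadamard (R - θ)) := by
  let T := {θ : Matrix (Fin K) (Fin K) ℝ | θ.PosSemidef ∧ θ.trace ≤ t} ∩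
    {θ | (θ.submatrix f f).det = 0}
  have hT : IsCompact T := (isCompact_setOf_posSemidef_trace_le t).inter_right
    (isClosed_eq (continuous_id.matrix_submatrix f f).matrix_det continuous_const)
  have hpos : ∀ θ ∈ T, 0 < frobSq (P.hadamard (R - θ)) := by
    rintro θ ⟨-, hdet⟩
    refine (frobSq_nonneg _).lt_of_ne' fun h => hR ?_
    have hagree : θ.submatrix f f = R.submatrix f f := by
      ext i i'
      exact apply_eq_of_frobSq_hadamard_eq_zero h (hP i i')
    rwa [← hagree]
  obtain ⟨c, hc, hle⟩ :=
    hT.exists_forall_le' (continuous_frobSq_hadamard_sub P R).continuousOn hpos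
  exact ⟨c, hc, fun θ hθ htr hrk => hle θ ⟨⟨hθ, htr⟩, det_submatrix_eq_zero_of_rank_lt f f hrk⟩⟩

end BandLoss

theorem mul_le_add_mul_and_eq_imp {L c τ : ℝ} {n q : ℕ} (hL : 0 ≤ L) (hτ : 0 < τ)
    (hτc : τ * (q + 1) < c) (hgap : n < q → c ≤ L) :
    τ * q ≤ L + τ * n ∧ (L + τ * n = τ * q → L = 0 ∧ n ≤ q) := by
  rcases lt_or_ge n q with hlow | hhigh
  · have := hgap hlow
    have : 0 ≤ τ * n := by positivity
    constructor <;> intros <;> linarith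
  · have : τ * q ≤ τ * n := by gcongr
    refine ⟨by linarith, fun h => ⟨by linarith, ?_⟩⟩
    exact_mod_cast le_of_mul_le_mul_left (by linarith : τ * n ≤ τ * q) hτ

theorem unique_minimizer_band_penalized_general
    (δ : ℝ) (hδ : δ ∈ Set.Ioo (0 : ℝ) 1) (q K : ℕ)
    (hK : (2 * (q : ℝ) + 1) / δ < (K : ℝ))
    (R : Matrix (Fin K) (Fin K) ℝ) (hR : R.PosSemidef)
    (hrank : R.rank = q)
    (hminor : ∀ f g : Fin q → Fin K, Function.Injective f → Function.Injective g →
      (R.submatrix f g).det ≠ 0) :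
    ∃ τ₀ > (0 : ℝ), ∀ τ ∈ Set.Ioo (0 : ℝ) τ₀,
      ∀ θ : Matrix (Fin K) (Fin K) ℝ, θ.PosSemidef → θ.trace ≤ R.trace →
        (((K : ℝ) ^ 2)⁻¹ * frobSq ((bandMatrix K δ).hadamard (R - R)) + τ * (R.rank : ℝ)
            ≤ ((K : ℝ) ^ 2)⁻¹ * frobSq ((bandMatrix K δ).hadamard (R - θ)) + τ * (θ.rank : ℝ))
          ∧ (((K : ℝ) ^ 2)⁻¹ * frobSq ((bandMatrix K δ).hadamard (R - θ)) + τ * (θ.rank : ℝ)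
              = ((K : ℝ) ^ 2)⁻¹ * frobSq ((bandMatrix K δ).hadamard (R - R)) + τ * (R.rank : ℝ)
              → θ = R) := by
  have hK0 : (0 : ℝ) < K := (div_pos (by positivity) hδ.1).trans hK
  have hqK : q ≤ K := hrank ▸ R.rank_le_width
  have hwindow : ∀ i i' : Fin q,
      |((Fin.castLE hqK i : ℕ) : ℤ) - (Fin.castLE hqK i' : ℕ)| < 2 * q := fun i i' => by
    simp only [Fin.val_castLE]
    exact abs_sub_lt_iff.2 ⟨by omega, by omega⟩
  obtain ⟨c, hc, hgap⟩ := exists_pos_le_frobSq_hadamard_of_rank_lt (bandMatrix K δ) R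
    (Fin.castLE hqK) (fun i i' => by simp [bandMatrix_eq_one hδ.1 hK (hwindow i i')])
    (hminor _ _ (Fin.castLE_injective hqK) (Fin.castLE_injective hqK)) R.trace
  refine ⟨((K : ℝ) ^ 2)⁻¹ * c / (q + 1), by positivity, ?_⟩
  rintro τ ⟨hτ, hτc⟩ θ hθ htr
  rw [sub_self, hadamard_zero, frobSq_zero, mul_zero, zero_add, hrank]
  obtain ⟨hle, heq⟩ := mul_le_add_mul_and_eq_imp (n := θ.rank)
    (L := ((K : ℝ) ^ 2)⁻¹ * frobSq ((bandMatrix K δ).hadamard (R - θ)))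
    (mul_nonneg (by positivity) (frobSq_nonneg _)) hτ
    ((lt_div_iff₀ (by positivity)).1 hτc) fun hlow => by
      gcongr; exact hgap θ hθ htr (by simpa using hlow)
  refine ⟨hle, fun h => ?_⟩
  obtain ⟨hzero, hrk⟩ := heq h
  refine eq_of_eqOn_band_of_rank_le (isHermitian_iff_isSymm.1 hθ.1)
    (isHermitian_iff_isSymm.1 hR.1) hrk hrank.le (fun f hf => hminor f f hf hf)
    fun j l hjl => apply_eq_of_frobSq_hadamard_eq_zero (by simpa [hK0.ne'] using hzero) ?_
  simp [bandMatrix_eq_one hδ.1 hK hjl]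

/-- Lagrangian reformulation of Proposition 2.
If `K > (2q+1)/δ` and `R` is symmetric positive semidefinite of rank exactly `q` with all
`q × q` minors nonzero, then for all sufficiently small `τ > 0`, `R` is the unique minimizer
of `θ ↦ K⁻² ‖P^K_δ ∘ (R − θ)‖²_F + τ rank θ` over PSD matrices with `trace θ ≤ trace R`. -/
theorem unique_minimizer_band_penalized
    (δ : ℝ) (hδ : δ ∈ Set.Ioo (0 : ℝ) 1) (q K : ℕ) (hq : 1 ≤ q)
    (hK : (2 * (q : ℝ) + 1) / δ < (K : ℝ))
    (R : Matrix (Fin K) (Fin K) ℝ) (hR : R.PosSemidef)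
    (hrank : R.rank = q)
    (hminor : ∀ f g : Fin q → Fin K, Function.Injective f → Function.Injective g →
      (R.submatrix f g).det ≠ 0) :
    ∃ τ₀ > (0 : ℝ), ∀ τ ∈ Set.Ioo (0 : ℝ) τ₀,
      ∀ θ : Matrix (Fin K) (Fin K) ℝ, θ.PosSemidef → θ.trace ≤ R.trace →
        (((K : ℝ) ^ 2)⁻¹ * frobSq ((bandMatrix K δ).hadamard (R - R)) + τ * (R.rank : ℝ)
            ≤ ((K : ℝ) ^ 2)⁻¹ * frobSq ((bandMatrix K δ).hadamard (R - θ)) + τ * (θ.rank : ℝ))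
          ∧ (((K : ℝ) ^ 2)⁻¹ * frobSq ((bandMatrix K δ).hadamard (R - θ)) + τ * (θ.rank : ℝ)
              = ((K : ℝ) ^ 2)⁻¹ * frobSq ((bandMatrix K δ).hadamard (R - R)) + τ * (R.rank : ℝ)
              → θ = R) :=
  unique_minimizer_band_penalized_general δ hδ q K hK R hR hrank hminor
end

section
/- The function ψ₂ : ℝ → ℝ defined by ψ₂(u) = e^{−|u|} for |u| ≤ 1, ψ₂(u) = e^{−1}(2 − |u|) for 1 < |u| ≤ 2, and ψ₂(u) = 0 for |u| > 2, is a positive definite function: for every positive integer n, all x₁,…,x_n ∈ ℝ and all c₁,…,c_n ∈ ℝ, Σ_{i=1}^n Σ_{j=1}^n c_i c_j ψ₂(x_i − x_j) ≥ 0. -/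
/-!
Esseen's function is a mixture of triangle kernels with nonnegative weights:
`ψ₂(u) = ∫₀¹ e^{-s} (s - |u|)₊ ds + e⁻¹ (2 - |u|)₊`, as one checks by integrating by parts on each
of the three pieces. The triangle kernel `(t - |u|)₊` is positive definite because it is the length
of `(a - t, a] ∩ (b - t, b]` for `u = a - b`, so its quadratic form is `∫ (∑ᵢ cᵢ 1_{(xᵢ - t, xᵢ]})²`.
Positive definiteness is preserved by nonnegative scaling, sums and integrals.
-/

/-- Esseen's tangent-line truncation of `e^{-|u|}`:
`ψ₂(u) = e^{-|u|}` for `|u| ≤ 1`, `ψ₂(u) = e⁻¹ (2 - |u|)` for `1 < |u| ≤ 2`,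
and `ψ₂(u) = 0` for `|u| > 2`. -/
noncomputable def psi₂ (u : ℝ) : ℝ :=
  if |u| ≤ 1 then Real.exp (-|u|)
  else if |u| ≤ 2 then Real.exp (-1) * (2 - |u|)
  else 0

open Set MeasureTheory Real

def IsPositiveDefinite (ψ : ℝ → ℝ) : Prop :=
  ∀ (n : ℕ) (x c : Fin n → ℝ), 0 ≤ ∑ i, ∑ j, c i * c j * ψ (x i - x j)

namespace IsPositiveDefinite

variable {ψ φ : ℝ → ℝ}

theorem add (hψ : IsPositiveDefinite ψ) (hφ : IsPositiveDefinite φ) :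
    IsPositiveDefinite (ψ + φ) := fun n x c => by
  simpa only [Pi.add_apply, mul_add, Finset.sum_add_distrib] using
    add_nonneg (hψ n x c) (hφ n x c)

theorem const_mul (hψ : IsPositiveDefinite ψ) {a : ℝ} (ha : 0 ≤ a) :
    IsPositiveDefinite fun u => a * ψ u := fun n x c => by
  have key : ∑ i, ∑ j, c i * c j * (a * ψ (x i - x j))
      = a * ∑ i, ∑ j, c i * c j * ψ (x i - x j) := by
    simp only [Finset.mul_sum]
    exact Finset.sum_congr rfl fun i _ => Finset.sum_congr rfl fun j _ => by ring
  exact key ▸ mul_nonneg ha (hψ n x c)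

theorem integral {Ω : Type*} [MeasurableSpace Ω] {μ : Measure Ω} {Ψ : Ω → ℝ → ℝ}
    (hΨ : ∀ᵐ s ∂μ, IsPositiveDefinite (Ψ s)) (hint : ∀ u, Integrable (fun s => Ψ s u) μ) :
    IsPositiveDefinite fun u => ∫ s, Ψ s u ∂μ := fun n x c => by
  have hint' : ∀ i j, Integrable (fun s => c i * c j * Ψ s (x i - x j)) μ :=
    fun i j => (hint _).const_mul _
  have key : ∑ i, ∑ j, c i * c j * ∫ s, Ψ s (x i - x j) ∂μ
      = ∫ s, ∑ i, ∑ j, c i * c j * Ψ s (x i - x j) ∂μ := by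
    rw [integral_finsetSum _ fun i _ => integrable_finsetSum _ fun j _ => hint' i j]
    refine Finset.sum_congr rfl fun i _ => ?_
    rw [integral_finsetSum _ fun j _ => hint' i j]
    simp only [integral_const_mul]
  rw [key]
  exact integral_nonneg_of_ae (hΨ.mono fun s hs => hs n x c)

end IsPositiveDefinite

theorem volume_real_Ioc_inter_Ioc_sub (t a b : ℝ) :
    volume.real (Ioc (a - t) a ∩ Ioc (b - t) b) = max (t - |a - b|) 0 := by
  rw [Ioc_inter_Ioc, Real.volume_real_Ioc, max_sub_sub_right, abs_sub_comm,
    ← max_sub_min_eq_abs]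
  ring_nf

theorem isPositiveDefinite_triangle (t : ℝ) : IsPositiveDefinite fun u => max (t - |u|) 0 := by
  intro n x c
  set f : Fin n → ℝ → ℝ := fun i => (Ioc (x i - t) (x i)).indicator fun _ => c i
  have hprod : ∀ i j, (fun s => f i s * f j s)
      = (Ioc (x i - t) (x i) ∩ Ioc (x j - t) (x j)).indicator fun _ => c i * c j :=
    fun i j => funext fun s => (inter_indicator_mul _ _ s).symm
  have hint : ∀ i j, Integrable (fun s => f i s * f j s) := fun i j => by
    rw [hprod]
    exact (integrable_indicator_iff (measurableSet_Ioc.inter measurableSet_Ioc)).2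
      (integrableOn_const (measure_inter_lt_top_of_left_ne_top measure_Ioc_lt_top.ne).ne)
  have hval : ∀ i j, ∫ s, f i s * f j s = c i * c j * max (t - |x i - x j|) 0 := fun i j => by
    rw [hprod, integral_indicator_const _ (measurableSet_Ioc.inter measurableSet_Ioc),
      volume_real_Ioc_inter_Ioc_sub, smul_eq_mul, mul_comm]
  calc (0 : ℝ) ≤ ∫ s, (∑ i, f i s) ^ 2 := integral_nonneg fun s => sq_nonneg _
    _ = ∫ s, ∑ i, ∑ j, f i s * f j s := by simp only [sq, Finset.sum_mul_sum]
    _ = ∑ i, ∑ j, c i * c j * max (t - |x i - x j|) 0 := by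
      rw [integral_finsetSum _ fun i _ => integrable_finsetSum _ fun j _ => hint i j]
      simp only [integral_finsetSum _ fun j _ => hint _ j, hval]

theorem integral_mul_max_sub_eq_zero (f : ℝ → ℝ) {a b c : ℝ} (hbc : b ≤ c) (hca : c ≤ a) :
    ∫ s in b..c, f s * max (s - a) 0 = 0 := by
  rw [intervalIntegral.integral_congr (g := fun _ => 0), intervalIntegral.integral_zero]
  intro s hs
  rw [uIcc_of_le hbc] at hs
  simp only [max_eq_right (by linarith [hs.2] : s - a ≤ 0), mul_zero]

theorem integral_exp_neg_mul_max_sub {a b : ℝ} (hab : a ≤ b) :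
    ∫ s in a..b, exp (-s) * max (s - a) 0 = exp (-a) - (b - a + 1) * exp (-b) := by
  have hderiv : ∀ s ∈ uIcc a b,
      HasDerivAt (fun s => -(s - a + 1) * exp (-s)) (exp (-s) * (s - a)) s := fun s _ => by
    have := ((((hasDerivAt_id' s).sub_const a).add_const 1).neg).mul (hasDerivAt_neg' s).exp
    exact this.congr_deriv (by simp only [Pi.neg_apply]; ring)
  rw [intervalIntegral.integral_congr (g := fun s => exp (-s) * (s - a)),
    intervalIntegral.integral_eq_sub_of_hasDerivAt hderiv
      ((by fun_prop : Continuous fun s => exp (-s) * (s - a)).intervalIntegrable a b)]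
  · ring_nf
  · intro s hs
    rw [uIcc_of_le hab] at hs
    simp only [max_eq_left (by linarith [hs.1] : 0 ≤ s - a)]

theorem psi₂_eq_integral_add (u : ℝ) :
    psi₂ u = (∫ s in (0 : ℝ)..1, exp (-s) * max (s - |u|) 0) + exp (-1) * max (2 - |u|) 0 := by
  have hu : 0 ≤ |u| := abs_nonneg u
  unfold psi₂
  split_ifs with h1 h2
  · rw [← intervalIntegral.integral_add_adjacent_intervals (b := |u|)
      ((by fun_prop : Continuous fun s => exp (-s) * max (s - |u|) 0).intervalIntegrable _ _)
      ((by fun_prop : Continuous fun s => exp (-s) * max (s - |u|) 0).intervalIntegrable _ _),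
      integral_mul_max_sub_eq_zero _ hu le_rfl, integral_exp_neg_mul_max_sub h1,
      max_eq_left (by linarith)]
    ring
  · rw [integral_mul_max_sub_eq_zero _ zero_le_one (by linarith), max_eq_left (by linarith)]
    ring
  · rw [integral_mul_max_sub_eq_zero _ zero_le_one (by linarith), max_eq_right (by linarith)]
    ring

theorem isPositiveDefinite_psi₂ : IsPositiveDefinite psi₂ := by
  rw [show psi₂ = (fun u => ∫ s in Ioc (0 : ℝ) 1, exp (-s) * max (s - |u|) 0)
      + fun u => exp (-1) * max (2 - |u|) 0 from
    funext fun u => by rw [psi₂_eq_integral_add, intervalIntegral.integral_of_le zero_le_one]; rfl]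
  refine .add (.integral (.of_forall fun s => ?_) fun u => ?_) ?_
  · exact (isPositiveDefinite_triangle s).const_mul (exp_pos _).le
  · exact (by fun_prop : Continuous fun s => exp (-s) * max (s - |u|) 0).integrableOn_Ioc
  · exact (isPositiveDefinite_triangle 2).const_mul (exp_pos _).le

/-- Esseen's construction is positive definite. -/
theorem psi₂_posDef :
    ∀ n : ℕ, 0 < n → ∀ x c : Fin n → ℝ,
      0 ≤ ∑ i, ∑ j, c i * c j * psi₂ (x i - x j) :=
  fun n _ => isPositiveDefinite_psi₂ n
end

section
/- Let W₁,…,W_n be independent identically distributed real random variables with mean 0 and variance σ² < ∞, and let (U₁,…,U_n) be {0,1}-valued random variables, jointly independent of (W₁,…,W_n). Set S = Σ_{m=1}^n U_m. Then E[ 1{S > 0} S^{−2} (Σ_{m=1}^n U_m W_m)² ] = σ² E[ 1{S > 0} / S ]. -/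
open MeasureTheory ProbabilityTheory

/-!
Condition on the random pattern `u = (U₁,…,U_n) ∈ {0,1}ⁿ`, which takes finitely many values and is
independent of `W`. For a fixed pattern with `S = ∑ u_m > 0`, independence and centring give
`E[(∑ u_m W_m)²] = σ² ∑ u_m² = σ² S`, so the integrand has conditional mean `σ² / S`; summing
over the patterns weighted by their probabilities yields the identity.
-/

section

variable {Ω : Type*} [MeasurableSpace Ω] {μ : Measure Ω}

theorem integral_comp_eq_sum_measureReal_mul_integral {α β : Type*} [MeasurableSpace α]
    [MeasurableSpace β] [MeasurableSingletonClass β] {X : Ω → α} {Y : Ω → β}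
    (hXY : IndepFun X Y μ) (hX : AEMeasurable X μ) (hY : Measurable Y)
    {s : Finset β} (hYs : ∀ ω, Y ω ∈ s) {F : β → α → ℝ} (hF : ∀ b, Measurable (F b))
    (hFint : ∀ b ∈ s, Integrable (fun ω => F b (X ω)) μ) :
    ∫ ω, F (Y ω) (X ω) ∂μ = ∑ b ∈ s, μ.real (Y ⁻¹' {b}) * ∫ ω, F b (X ω) ∂μ := by
  have hpart : ∀ ω, F (Y ω) (X ω) = ∑ b ∈ s, (Y ⁻¹' {b}).indicator (fun ω => F b (X ω)) ω := by
    intro ω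
    rw [Finset.sum_eq_single_of_mem (Y ω) (hYs ω) fun b _ hb => ?_]
    · simp
    · simp [Ne.symm hb]
  simp_rw [hpart]
  rw [integral_finsetSum _ fun b hb => (hFint b hb).indicator (hY (measurableSet_singleton b))]
  refine Finset.sum_congr rfl fun b _ => ?_
  rw [integral_indicator (hY (measurableSet_singleton b))]
  exact ((IndepFun_iff_Indep _ _ _).1 hXY.symm).setIntegral_eq_mul hY.comap_le hX
    ⟨{b}, measurableSet_singleton b, rfl⟩ (hF b).aestronglyMeasurable

theorem integral_sq_sum_mul_eq {ι : Type*} [Fintype ι] [IsFiniteMeasure μ] {W : ι → Ω → ℝ}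
    {σ : ℝ} (hW : iIndepFun W μ) (hW2 : ∀ i, MemLp (W i) 2 μ) (hmean : ∀ i, ∫ ω, W i ω ∂μ = 0)
    (hvar : ∀ i, ∫ ω, W i ω ^ 2 ∂μ = σ ^ 2) (a : ι → ℝ) :
    ∫ ω, (∑ i, a i * W i ω) ^ 2 ∂μ = σ ^ 2 * ∑ i, a i ^ 2 := by
  set X : ι → Ω → ℝ := fun i ω => a i * W i ω
  have hX : ∀ i, MemLp (X i) 2 μ := fun i => (hW2 i).const_mul (a i)
  have hXmean : ∀ i, ∫ ω, X i ω ∂μ = 0 := fun i => by simp [X, integral_const_mul, hmean]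
  have hsum_mean : ∫ ω, (∑ i, X i) ω ∂μ = 0 := by
    simp only [Finset.sum_apply]
    rw [integral_finsetSum _ fun i _ => (hX i).integrable one_le_two]
    simp [hXmean]
  calc ∫ ω, (∑ i, a i * W i ω) ^ 2 ∂μ = Var[∑ i, X i; μ] := by
        rw [variance_of_integral_eq_zero
          (Finset.aemeasurable_sum _ fun i _ => (hX i).aemeasurable) hsum_mean]
        simp [X]
    _ = ∑ i, Var[X i; μ] :=
        IndepFun.variance_sum (fun i _ => hX i) fun i _ j _ hij =>
          (hW.indepFun hij).comp (measurable_const_mul (a i)) (measurable_const_mul (a j))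
    _ = σ ^ 2 * ∑ i, a i ^ 2 := by
        rw [Finset.mul_sum]
        refine Finset.sum_congr rfl fun i _ => ?_
        rw [variance_const_mul, variance_of_integral_eq_zero (hW2 i).aemeasurable (hmean i), hvar,
          mul_comm]

theorem integral_sq_sum_mul_div_sq_eq {ι : Type*} [Fintype ι] [IsFiniteMeasure μ] {W : ι → Ω → ℝ}
    {σ : ℝ} (hW : iIndepFun W μ) (hW2 : ∀ i, MemLp (W i) 2 μ) (hmean : ∀ i, ∫ ω, W i ω ∂μ = 0)
    (hvar : ∀ i, ∫ ω, W i ω ^ 2 ∂μ = σ ^ 2) {u : ι → ℝ} (hu : ∀ i, u i = 0 ∨ u i = 1)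
    (hS : 0 < ∑ i, u i) :
    ∫ ω, (∑ i, u i * W i ω) ^ 2 / (∑ i, u i) ^ 2 ∂μ = σ ^ 2 * (1 / ∑ i, u i) := by
  have hsq : ∑ i, u i ^ 2 = ∑ i, u i :=
    Finset.sum_congr rfl fun i _ => by rcases hu i with h | h <;> simp [h]
  rw [integral_div, integral_sq_sum_mul_eq hW hW2 hmean hvar, hsq]
  field_simp

end

theorem conditional_variance_identity_general
    {Ω : Type*} [MeasureSpace Ω] [IsProbabilityMeasure (ℙ : Measure Ω)]
    (n : ℕ) (W U : Fin n → Ω → ℝ) (σ : ℝ)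
    (hUmeas : ∀ m, Measurable (U m))
    (hWindep : iIndepFun W ℙ)
    (hWint : ∀ m, Integrable (W m) ℙ)
    (hWsq : ∀ m, Integrable (fun ω => (W m ω) ^ 2) ℙ)
    (hWmean : ∀ m, ∫ ω, W m ω = 0)
    (hWvar : ∀ m, ∫ ω, (W m ω) ^ 2 = σ ^ 2)
    (hU01 : ∀ m ω, U m ω = 0 ∨ U m ω = 1)
    (hWUindep : IndepFun (fun ω (m : Fin n) => W m ω) (fun ω (m : Fin n) => U m ω) ℙ) :
    (∫ ω, if 0 < ∑ m, U m ω then (∑ m, U m ω * W m ω) ^ 2 / (∑ m, U m ω) ^ 2 else 0) =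
      σ ^ 2 * ∫ ω, if 0 < ∑ m, U m ω then 1 / (∑ m, U m ω) else 0 := by
  set s := Fintype.piFinset fun _ : Fin n => ({0, 1} : Finset ℝ)
  have hUs : ∀ ω, (fun m => U m ω) ∈ s := fun ω =>
    Fintype.mem_piFinset.2 fun m => by rcases hU01 m ω with h | h <;> simp [h]
  have hX : AEMeasurable (fun ω m => W m ω) :=
    aemeasurable_pi_lambda _ fun m => (hWint m).aemeasurable
  have hY : Measurable fun ω m => U m ω := measurable_pi_lambda _ hUmeas
  have hW2 : ∀ m, MemLp (W m) 2 :=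
    fun m => (memLp_two_iff_integrable_sq (hWint m).aestronglyMeasurable).2 (hWsq m)
  rw [integral_comp_eq_sum_measureReal_mul_integral hWUindep hX hY hUs
      (F := fun u w => if 0 < ∑ m, u m then (∑ m, u m * w m) ^ 2 / (∑ m, u m) ^ 2 else 0)
      (fun u => by split_ifs <;> fun_prop) fun u _ => ?_,
    integral_comp_eq_sum_measureReal_mul_integral hWUindep hX hY hUs
      (F := fun u (_ : Fin n → ℝ) => if 0 < ∑ m, u m then 1 / ∑ m, u m else 0)
      (fun _ => measurable_const) fun _ _ => integrable_const _, Finset.mul_sum]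
  · refine Finset.sum_congr rfl fun u hu => ?_
    have hu01 : ∀ m, u m = 0 ∨ u m = 1 := fun m => by simpa using Fintype.mem_piFinset.1 hu m
    by_cases hS : 0 < ∑ m, u m
    · simp only [if_pos hS, integral_sq_sum_mul_div_sq_eq hWindep hW2 hWmean hWvar hu01 hS,
        integral_const, probReal_univ, smul_eq_mul, one_mul]
      ring
    · simp [hS]
  · split_ifs
    · exact (memLp_finsetSum _ fun m _ => (hW2 m).const_mul (u m)).integrable_sq.div_const _
    · exact integrable_zero _ _ _

/-- conditional-variance identity for the patched estimator.
If `W₁,…,W_n` are i.i.d. with mean `0` and variance `σ²`, and `(U₁,…,U_n)` are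
`{0,1}`-valued and jointly independent of `(W₁,…,W_n)`, then with `S = ∑ U_m`,
`E[1{S>0} S⁻² (∑ U_m W_m)²] = σ² E[1{S>0} / S]`. -/
theorem conditional_variance_identity
    {Ω : Type*} [MeasureSpace Ω] [IsProbabilityMeasure (ℙ : Measure Ω)]
    (n : ℕ) (hn : 0 < n) (W U : Fin n → Ω → ℝ) (σ : ℝ)
    (hWmeas : ∀ m, Measurable (W m))
    (hUmeas : ∀ m, Measurable (U m))
    (hWindep : iIndepFun W ℙ)
    (hWident : ∀ m m', IdentDistrib (W m) (W m') ℙ ℙ)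
    (hWint : ∀ m, Integrable (W m) ℙ)
    (hWsq : ∀ m, Integrable (fun ω => (W m ω) ^ 2) ℙ)
    (hWmean : ∀ m, ∫ ω, W m ω = 0)
    (hWvar : ∀ m, ∫ ω, (W m ω) ^ 2 = σ ^ 2)
    (hU01 : ∀ m ω, U m ω = 0 ∨ U m ω = 1)
    (hWUindep : IndepFun (fun ω (m : Fin n) => W m ω) (fun ω (m : Fin n) => U m ω) ℙ) :
    (∫ ω, if 0 < ∑ m, U m ω then (∑ m, U m ω * W m ω) ^ 2 / (∑ m, U m ω) ^ 2 else 0) =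
      σ ^ 2 * ∫ ω, if 0 < ∑ m, U m ω then 1 / (∑ m, U m ω) else 0 :=
  conditional_variance_identity_general n W U σ hUmeas hWindep hWint hWsq hWmean hWvar hU01 hWUindep
end
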